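/- Let G be a group, G = G₀ ≥ G₁ ≥ ⋯ ≥ Gₙ = {1} a chain with each Gᵢ₊₁ normal in Gᵢ, and let C ≤ G. Suppose for each i < n, either the quotient Gᵢ/Gᵢ₊₁ is abelian, or every element of C normalizes both Gᵢ and Gᵢ₊₁ and acts trivially by conjugation on Gᵢ/Gᵢ₊₁ (i.e., [C, Gᵢ] ⊆ Gᵢ₊₁). Then C is solvable. -/

import Mathlib

/-! The `k`-th derived subgroup `D` of `C` lies in `Gs k`, by induction: as `D ≤ C ∩ Gs k`,
`⁅D, D⁆` lies in both `⁅Gs k, Gs k⁆` and `⁅C, Gs k⁆`, one of which is contained in `Gs (k + 1)`.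
At `k = n` this makes the derived series of `C` reach `⊥`. -/

open Subgroup

theorem map_subtype_derivedSeries_le {G : Type*} [Group G] (C : Subgroup G)
    (Gs : ℕ → Subgroup G) (n : ℕ) (h0 : C ≤ Gs 0)
    (hstep : ∀ i < n, ⁅Gs i, Gs i⁆ ≤ Gs (i + 1) ∨ ⁅C, Gs i⁆ ≤ Gs (i + 1)) :
    ∀ k ≤ n, (derivedSeries C k).map C.subtype ≤ Gs k := by
  intro k
  induction k with
  | zero => intro _; rwa [derivedSeries_zero, ← MonoidHom.range_eq_map, range_subtype]
  | succ k ih =>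
    intro hk
    have hmem : (derivedSeries C k).map C.subtype ≤ Gs k := ih (by omega)
    have hle : (derivedSeries C k).map C.subtype ≤ C := map_subtype_le _
    rw [derivedSeries_succ, map_commutator]
    rcases hstep k (by omega) with habelian | hcentral
    · exact (commutator_mono hmem hmem).trans habelian
    · exact (commutator_mono hle hmem).trans hcentral

theorem Subgroup.isSolvable_of_map_subtype_derivedSeries_eq_bot {G : Type*} [Group G]
    {H : Subgroup G} {n : ℕ} (h : (derivedSeries H n).map H.subtype = ⊥) :
    Group.IsSolvable H :=
  ⟨n, (map_eq_bot_iff_of_injective _ H.subtype_injective).mp h⟩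

theorem solvable_of_chain_abelian_or_central_general {G : Type*} [Group G] (n : ℕ)
    (Gs : ℕ → Subgroup G)
    (h0 : Gs 0 = ⊤) (hn : Gs n = ⊥)
    (C : Subgroup G)
    (hcases : ∀ i < n, ⁅Gs i, Gs i⁆ ≤ Gs (i + 1) ∨
      ((∀ c ∈ C, ∀ x ∈ Gs i, c * x * c⁻¹ ∈ Gs i) ∧
       (∀ c ∈ C, ∀ x ∈ Gs (i + 1), c * x * c⁻¹ ∈ Gs (i + 1)) ∧
       ⁅C, Gs i⁆ ≤ Gs (i + 1))) :
    IsSolvable C := by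
  have hstep (i : ℕ) (hi : i < n) : ⁅Gs i, Gs i⁆ ≤ Gs (i + 1) ∨ ⁅C, Gs i⁆ ≤ Gs (i + 1) :=
    (hcases i hi).imp_right fun h => h.2.2
  have hbot := map_subtype_derivedSeries_le C Gs n (h0 ▸ le_top) hstep n le_rfl
  rw [hn, le_bot_iff] at hbot
  exact isSolvable_of_map_subtype_derivedSeries_eq_bot hbot

theorem solvable_of_chain_abelian_or_central {G : Type*} [Group G] (n : ℕ)
    (Gs : ℕ → Subgroup G)
    (h0 : Gs 0 = ⊤) (hn : Gs n = ⊥)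
    (hchain : ∀ i < n, Gs (i + 1) ≤ Gs i)
    (hnormal : ∀ i < n, ∀ g ∈ Gs i, ∀ x ∈ Gs (i + 1), g * x * g⁻¹ ∈ Gs (i + 1))
    (C : Subgroup G)
    (hcases : ∀ i < n, ⁅Gs i, Gs i⁆ ≤ Gs (i + 1) ∨
      ((∀ c ∈ C, ∀ x ∈ Gs i, c * x * c⁻¹ ∈ Gs i) ∧
       (∀ c ∈ C, ∀ x ∈ Gs (i + 1), c * x * c⁻¹ ∈ Gs (i + 1)) ∧
       ⁅C, Gs i⁆ ≤ Gs (i + 1))) :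
    IsSolvable C :=
  solvable_of_chain_abelian_or_central_general n Gs h0 hn C hcases
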